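/- arXiv:2406.02087 — 2 statements merged into one kernel-verified Lean document; each statement's English description precedes it below -/
import Mathlib

section
/- Let φ be a Schwartz function on ℝⁿ and φ_t(x) := t^{-n}φ(x/t). There exists C > 0 depending only on n and φ such that for every ball B(x₀, r), all x, y ∈ B(x₀, r), every z ∉ B(x₀, 2r), and every t > 0, |∂/∂t(φ_t(x − z) − φ_t(y − z))| ≤ C |x − y| / (t^{3/2} |z − x₀|^{n + 1/2}). -/
/-!
Differentiating the dilation in `t` gives `∂ₜ φ_t = -t⁻¹ ψ_t` with `ψ = n φ + ⟨u, ∇φ(u)⟩`, which is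
again a Schwartz function. The points `x - z`, `y - z` lie in the ball `B(x₀ - z, r)`, whose points
all have norm at least `|z - x₀| / 2`, so by the mean value theorem it suffices to bound
`‖∇ψ_t(w)‖ = t^{-n-1} ‖∇ψ(w / t)‖` there. The Schwartz decay `|u|^{n + 1/2} ‖∇ψ(u)‖ ≤ M` turns this
into `M t^{-1/2} |w|^{-(n + 1/2)}`, and the extra factor `t⁻¹` gives `t^{-3/2}`.
-/

open MeasureTheory Metric

/-- Dilation `φ_t(x) = t^{-n} φ(x/t)` of a Schwartz function. -/
noncomputable def schwartzDil {n : ℕ} (φ : SchwartzMap (EuclideanSpace ℝ (Fin n)) ℝ)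
    (t : ℝ) (x : EuclideanSpace ℝ (Fin n)) : ℝ :=
  t ^ (-(n : ℤ)) * φ (t⁻¹ • x)

namespace SchwartzMap

variable {E F : Type*} [NormedAddCommGroup E] [NormedSpace ℝ E]
  [NormedAddCommGroup F] [NormedSpace ℝ F]

theorem exists_rpow_mul_norm_le (f : 𝓢(E, F)) {e : ℝ} (he : 0 ≤ e) :
    ∃ M > 0, ∀ u, ‖u‖ ^ e * ‖f u‖ ≤ M := by
  set k := ⌈e⌉₊
  set S := 2 ^ k * (Finset.Iic (k, 0)).sup (fun m => SchwartzMap.seminorm ℝ m.1 m.2) f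
  refine ⟨S + 1, by positivity, fun u => ?_⟩
  have hdecay := one_add_le_sup_seminorm_apply (𝕜 := ℝ) (m := (k, 0)) le_rfl le_rfl f u
  rw [norm_iteratedFDeriv_zero] at hdecay
  have hpow : ‖u‖ ^ e ≤ (1 + ‖u‖) ^ k := calc
    ‖u‖ ^ e ≤ (1 + ‖u‖) ^ e := by gcongr; linarith
    _ ≤ (1 + ‖u‖) ^ (k : ℝ) :=
      Real.rpow_le_rpow_of_exponent_le (by linarith [norm_nonneg u]) (Nat.le_ceil e)
    _ = (1 + ‖u‖) ^ k := Real.rpow_natCast _ _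
  calc ‖u‖ ^ e * ‖f u‖ ≤ (1 + ‖u‖) ^ k * ‖f u‖ := by gcongr
    _ ≤ S := hdecay
    _ ≤ S + 1 := by linarith

noncomputable def euler (f : 𝓢(E, F)) : 𝓢(E, F) :=
  bilinLeftCLM (ContinuousLinearMap.id ℝ (E →L[ℝ] F)) Function.HasTemperateGrowth.id
    (fderivCLM ℝ E F f)

@[simp]
theorem euler_apply (f : 𝓢(E, F)) (u : E) : euler f u = fderiv ℝ f u u := rfl

end SchwartzMap

open SchwartzMap

section Dilation

variable {n : ℕ} (φ : 𝓢(EuclideanSpace ℝ (Fin n), ℝ))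

noncomputable def dilationGenerator : 𝓢(EuclideanSpace ℝ (Fin n), ℝ) :=
  (n : ℝ) • φ + euler φ

theorem hasDerivAt_schwartzDil (w : EuclideanSpace ℝ (Fin n)) {t : ℝ} (ht : t ≠ 0) :
    HasDerivAt (schwartzDil φ · w) (-t⁻¹ * schwartzDil (dilationGenerator φ) t w) t := by
  have hpow := hasDerivAt_zpow (-(n : ℤ)) t (Or.inl ht)
  have harg : HasDerivAt (fun s : ℝ => s⁻¹ • w) ((-(t ^ 2)⁻¹) • w) t :=
    (hasDerivAt_inv ht).smul_const w
  have hφ := (φ.hasFDerivAt (t⁻¹ • w)).comp_hasDerivAt t harg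
  refine (hpow.mul hφ).congr_deriv ?_
  simp only [schwartzDil, dilationGenerator, add_apply, smul_apply, euler_apply,
    Function.comp_apply, Int.cast_neg, Int.cast_natCast, zpow_sub_one₀ ht, zpow_neg, zpow_natCast,
    map_smul, smul_eq_mul]
  ring

theorem norm_fderiv_schwartzDil {t : ℝ} (ht : 0 < t) (w : EuclideanSpace ℝ (Fin n)) :
    ‖fderiv ℝ (schwartzDil φ t) w‖ = t ^ (-(n : ℤ)) * t⁻¹ * ‖fderiv ℝ φ (t⁻¹ • w)‖ := by
  have : fderiv ℝ (schwartzDil φ t) w = t ^ (-(n : ℤ)) • t⁻¹ • fderiv ℝ φ (t⁻¹ • w) := by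
    rw [← fderiv_comp_smul]
    exact fderiv_const_mul (φ.differentiableAt.comp w (differentiableAt_id.const_smul t⁻¹)) _
  rw [this, norm_smul, norm_smul, Real.norm_of_nonneg (by positivity),
    Real.norm_of_nonneg (by positivity), mul_assoc]

theorem differentiable_schwartzDil (t : ℝ) : Differentiable ℝ (schwartzDil φ t) := by
  unfold schwartzDil
  fun_prop

theorem norm_fderiv_schwartzDil_mul_rpow_le {e M : ℝ}
    (hM : ∀ u, ‖u‖ ^ e * ‖fderiv ℝ φ u‖ ≤ M) {t : ℝ} (ht : 0 < t) (w : EuclideanSpace ℝ (Fin n)) :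
    ‖fderiv ℝ (schwartzDil φ t) w‖ * ‖w‖ ^ e ≤ M * t ^ (e - n - 1) := by
  have hw : ‖w‖ ^ e = t ^ e * ‖t⁻¹ • w‖ ^ e := by
    rw [norm_smul, Real.norm_of_nonneg (by positivity), Real.mul_rpow (by positivity) (by positivity),
      Real.inv_rpow ht.le, mul_inv_cancel_left₀ (by positivity)]
  have hpow : t ^ (-(n : ℤ)) * t⁻¹ * t ^ e = t ^ (e - n - 1) := by
    rw [← Real.rpow_intCast, ← Real.rpow_neg_one, ← Real.rpow_add ht, ← Real.rpow_add ht]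
    push_cast
    ring_nf
  calc ‖fderiv ℝ (schwartzDil φ t) w‖ * ‖w‖ ^ e
      = t ^ (-(n : ℤ)) * t⁻¹ * t ^ e * (‖t⁻¹ • w‖ ^ e * ‖fderiv ℝ φ (t⁻¹ • w)‖) := by
        rw [norm_fderiv_schwartzDil φ ht, hw]
        ring
    _ ≤ t ^ (-(n : ℤ)) * t⁻¹ * t ^ e * M := by gcongr; exact hM _
    _ = M * t ^ (e - n - 1) := by rw [hpow, mul_comm]

theorem abs_schwartzDil_sub_le {e M : ℝ} (he : 0 ≤ e) (hM : ∀ u, ‖u‖ ^ e * ‖fderiv ℝ φ u‖ ≤ M)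
    {s : Set (EuclideanSpace ℝ (Fin n))} (hs : Convex ℝ s) {ρ : ℝ} (hρ : 0 < ρ)
    (hsρ : ∀ w ∈ s, ρ ≤ ‖w‖) {t : ℝ} (ht : 0 < t) {w₁ w₂ : EuclideanSpace ℝ (Fin n)}
    (hw₁ : w₁ ∈ s) (hw₂ : w₂ ∈ s) :
    |schwartzDil φ t w₁ - schwartzDil φ t w₂| ≤ M * t ^ (e - n - 1) / ρ ^ e * ‖w₁ - w₂‖ := by
  rw [← Real.norm_eq_abs]
  refine hs.norm_image_sub_le_of_norm_fderiv_le (fun w _ => differentiable_schwartzDil φ t w)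
    (fun w hw => ?_) hw₂ hw₁
  have hwρ := hsρ w hw
  rw [le_div_iff₀ (by positivity)]
  calc ‖fderiv ℝ (schwartzDil φ t) w‖ * ρ ^ e ≤ ‖fderiv ℝ (schwartzDil φ t) w‖ * ‖w‖ ^ e := by
        gcongr
    _ ≤ M * t ^ (e - n - 1) := norm_fderiv_schwartzDil_mul_rpow_le φ hM ht w

end Dilation

theorem half_norm_le_norm_of_mem_ball {E : Type*} [SeminormedAddCommGroup E] {c w : E} {r : ℝ}
    (hw : w ∈ ball c r) (hc : 2 * r ≤ ‖c‖) : ‖c‖ / 2 ≤ ‖w‖ := by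
  rw [mem_ball_iff_norm] at hw
  linarith [norm_sub_norm_le c w, norm_sub_rev c w]

theorem stmt3 (n : ℕ) (φ : SchwartzMap (EuclideanSpace ℝ (Fin n)) ℝ) :
    ∃ C > 0, ∀ (x₀ : EuclideanSpace ℝ (Fin n)) (r : ℝ), 0 < r →
      ∀ x ∈ ball x₀ r, ∀ y ∈ ball x₀ r, ∀ z ∉ ball x₀ (2 * r), ∀ t : ℝ, 0 < t →
        |deriv (fun s : ℝ => schwartzDil φ s (x - z) - schwartzDil φ s (y - z)) t|
          ≤ C * ‖x - y‖ / (t ^ ((3 : ℝ) / 2) * ‖z - x₀‖ ^ ((n : ℝ) + 1 / 2)) := by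
  set e : ℝ := n + 1 / 2
  obtain ⟨M, hM_pos, hM⟩ :=
    (fderivCLM ℝ _ ℝ (dilationGenerator φ)).exists_rpow_mul_norm_le (e := e) (by positivity)
  refine ⟨2 ^ e * M, by positivity, fun x₀ r hr x hx y hy z hz t ht => ?_⟩
  have hR : 2 * r ≤ ‖x₀ - z‖ := by simpa [dist_eq_norm'] using hz
  have hmem : ∀ v ∈ ball x₀ r, v - z ∈ ball (x₀ - z) r := fun v hv => by simpa [dist_eq_norm] using hv
  have hlip := abs_schwartzDil_sub_le (dilationGenerator φ) (by positivity) hM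
    (convex_ball (x₀ - z) r) (by linarith) (fun w hw => half_norm_le_norm_of_mem_ball hw hR) ht
    (hmem x hx) (hmem y hy)
  rw [sub_sub_sub_cancel_right, norm_sub_rev x₀ z] at hlip
  have ht_pow : t ^ (e - n - 1) = t / t ^ ((3 : ℝ) / 2) := by
    rw [eq_div_iff (by positivity), ← Real.rpow_add ht]
    norm_num [e]
  rw [((hasDerivAt_schwartzDil φ _ ht.ne').fun_sub (hasDerivAt_schwartzDil φ _ ht.ne')).deriv]
  calc |-t⁻¹ * schwartzDil (dilationGenerator φ) t (x - z)
          - -t⁻¹ * schwartzDil (dilationGenerator φ) t (y - z)|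
      = t⁻¹ * |schwartzDil (dilationGenerator φ) t (x - z)
          - schwartzDil (dilationGenerator φ) t (y - z)| := by
        rw [← mul_sub, abs_mul, abs_neg, abs_of_pos (inv_pos.2 ht)]
    _ ≤ t⁻¹ * (M * t ^ (e - n - 1) / (‖z - x₀‖ / 2) ^ e * ‖x - y‖) := by gcongr
    _ = 2 ^ e * M * ‖x - y‖ / (t ^ ((3 : ℝ) / 2) * ‖z - x₀‖ ^ e) := by
        rw [ht_pow, Real.div_rpow (norm_nonneg _) zero_le_two]
        field_simp
end

section
/- Let φ be a Schwartz function on ℝⁿ, {a_i}_{i∈ℤ} a sequence with 1 < δ ≤ a_{i+1}/a_i ≤ δ² for all i, and {v_i} a bounded complex sequence. Then there exists C > 0 depending on n, φ, δ, ‖v‖_{ℓ∞} such that for all integers −M ≤ m−1, all k ≥ m, and all z, y ∈ ℝⁿ with |z − y| ≥ a_k, |∑_{i=−M}^{m−1} v_i (φ_{a_{i+1}}(z−y) − φ_{a_i}(z−y))| ≤ C δ^{m−k+1} / a_k^n. -/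
open MeasureTheory Metric Finset

/-! No cancellation between consecutive dilations is needed. The Schwartz decay
`|φ u| ≤ C_φ |u|^{-(n+1)}` gives `|φ_t w| ≤ C_φ t / |w|^{n+1}`, so the `i`-th term is
`O(a_{i+1} / |w|^{n+1})`. Since `a_{i+1} ≥ δ a_i`, the `a_{i+1}` with `i < m` are dominated by a
geometric series: their sum is at most `δ/(δ-1) · a_m ≤ δ/(δ-1) · δ^{m-k} a_k`, and `|w| ≥ a_k`
turns `a_k / |w|^{n+1}` into `a_k^{-n}`. -/

theorem norm_schwartzDil_le {n : ℕ} (φ : SchwartzMap (EuclideanSpace ℝ (Fin n)) ℝ) {t : ℝ}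
    (ht : 0 < t) {x : EuclideanSpace ℝ (Fin n)} (hx : x ≠ 0) :
    ‖schwartzDil φ t x‖ ≤ SchwartzMap.seminorm ℝ (n + 1) 0 φ * t / ‖x‖ ^ (n + 1) := by
  have hdecay := SchwartzMap.norm_pow_mul_le_seminorm ℝ φ (n + 1) (t⁻¹ • x)
  rw [norm_smul, norm_inv, Real.norm_of_nonneg ht.le, mul_pow] at hdecay
  rw [le_div_iff₀ (by positivity), schwartzDil, norm_mul, norm_zpow, Real.norm_of_nonneg ht.le,
    zpow_neg, zpow_natCast]
  calc (t ^ n)⁻¹ * ‖φ (t⁻¹ • x)‖ * ‖x‖ ^ (n + 1)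
      = t * ((t⁻¹) ^ (n + 1) * ‖x‖ ^ (n + 1) * ‖φ (t⁻¹ • x)‖) := by
        rw [show (t ^ n)⁻¹ = t * t⁻¹ ^ (n + 1) by rw [inv_pow, pow_succ]; field_simp]
        ring
    _ ≤ t * SchwartzMap.seminorm ℝ (n + 1) 0 φ := by gcongr
    _ = _ := mul_comm _ _

theorem norm_schwartzDil_sub_le {n : ℕ} (φ : SchwartzMap (EuclideanSpace ℝ (Fin n)) ℝ)
    {s t : ℝ} (hs : 0 < s) (hst : s ≤ t) {x : EuclideanSpace ℝ (Fin n)} (hx : x ≠ 0) :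
    ‖schwartzDil φ t x - schwartzDil φ s x‖
      ≤ 2 * SchwartzMap.seminorm ℝ (n + 1) 0 φ * t / ‖x‖ ^ (n + 1) := by
  have hs' := norm_schwartzDil_le φ hs hx
  have ht' := norm_schwartzDil_le φ (hs.trans_le hst) hx
  have : SchwartzMap.seminorm ℝ (n + 1) 0 φ * s ≤ SchwartzMap.seminorm ℝ (n + 1) 0 φ * t := by
    gcongr
  calc ‖schwartzDil φ t x - schwartzDil φ s x‖ ≤ ‖schwartzDil φ t x‖ + ‖schwartzDil φ s x‖ :=
        norm_sub_le _ _
    _ ≤ _ := by rw [two_mul, add_mul, add_div]; exact add_le_add ht' (hs'.trans (by gcongr))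

theorem le_zpow_sub_mul_of_mul_le_succ {a : ℤ → ℝ} {δ : ℝ} (hδ : 0 < δ)
    (ha : ∀ i, a i * δ ≤ a (i + 1)) {j l : ℤ} (hjl : j ≤ l) : a j ≤ δ ^ (j - l) * a l := by
  induction l, hjl using Int.leInduction with
  | base => simp
  | succ l _ ih =>
    calc a j ≤ δ ^ (j - l) * a l := ih
      _ = δ ^ (j - (l + 1)) * (a l * δ) := by
        rw [mul_comm (a l), ← mul_assoc, ← zpow_add_one₀ hδ.ne']; ring_nf
      _ ≤ δ ^ (j - (l + 1)) * a (l + 1) := by gcongr; exact ha l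

theorem sum_zpow_sub_le {δ : ℝ} (hδ : 1 < δ) {s : Finset ℤ} {q : ℤ} (hs : ∀ i ∈ s, i ≤ q) :
    ∑ i ∈ s, δ ^ (i - q) ≤ δ / (δ - 1) := by
  have hinv : δ⁻¹ < 1 := inv_lt_one_of_one_lt₀ hδ
  have hinj : Set.InjOn (fun i => (q - i).toNat) s := by
    intro i hi j hj hij
    have := hs i hi; have := hs j hj
    simp only at hij
    omega
  calc ∑ i ∈ s, δ ^ (i - q) = ∑ d ∈ s.image (fun i => (q - i).toNat), δ⁻¹ ^ d := by
        rw [Finset.sum_image hinj]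
        refine Finset.sum_congr rfl fun i hi => ?_
        rw [← zpow_natCast, Int.toNat_of_nonneg (by linarith [hs i hi]), inv_zpow', neg_sub]
    _ ≤ ∑' d : ℕ, δ⁻¹ ^ d :=
        Summable.sum_le_tsum _ (fun _ _ => by positivity)
          (summable_geometric_of_lt_one (by positivity) hinv)
    _ = δ / (δ - 1) := by
        rw [tsum_geometric_of_lt_one (by positivity) hinv]
        field_simp

theorem sum_le_div_sub_one_mul_of_mul_le_succ {a : ℤ → ℝ} {δ : ℝ} (hδ : 1 < δ)
    (ha : ∀ i, a i * δ ≤ a (i + 1)) {s : Finset ℤ} {q : ℤ} (hs : ∀ i ∈ s, i ≤ q) (hq : 0 ≤ a q) :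
    ∑ i ∈ s, a i ≤ δ / (δ - 1) * a q :=
  calc ∑ i ∈ s, a i ≤ ∑ i ∈ s, δ ^ (i - q) * a q :=
        Finset.sum_le_sum fun i hi => le_zpow_sub_mul_of_mul_le_succ (by linarith) ha (hs i hi)
    _ = (∑ i ∈ s, δ ^ (i - q)) * a q := (Finset.sum_mul _ _ _).symm
    _ ≤ δ / (δ - 1) * a q := by gcongr; exact sum_zpow_sub_le hδ hs

theorem norm_sum_mul_schwartzDil_sub_le {n : ℕ} (φ : SchwartzMap (EuclideanSpace ℝ (Fin n)) ℝ)
    {a : ℤ → ℝ} {v : ℤ → ℂ} {δ V : ℝ} (hδ : 1 < δ) (ha : ∀ i, 0 < a i)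
    (hgrow : ∀ i, a i * δ ≤ a (i + 1)) (hv : ∀ i, ‖v i‖ ≤ V) {s : Finset ℤ} {q : ℤ}
    (hs : ∀ i ∈ s, i < q) {x : EuclideanSpace ℝ (Fin n)} (hx : x ≠ 0) :
    ‖∑ i ∈ s, v i * ((schwartzDil φ (a (i + 1)) x - schwartzDil φ (a i) x : ℝ) : ℂ)‖
      ≤ 2 * V * SchwartzMap.seminorm ℝ (n + 1) 0 φ * (δ / (δ - 1)) * a q / ‖x‖ ^ (n + 1) := by
  set Cφ := SchwartzMap.seminorm ℝ (n + 1) 0 φ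
  have hV : 0 ≤ V := (norm_nonneg _).trans (hv 0)
  have hsum : ∑ i ∈ s, a (i + 1) ≤ δ / (δ - 1) * a q := by
    simpa using sum_le_div_sub_one_mul_of_mul_le_succ hδ (a := fun i => a (i + 1))
      (fun i => hgrow (i + 1)) (q := q - 1) (fun i hi => Int.le_sub_one_of_lt (hs i hi))
      (by simpa using (ha q).le)
  calc ‖∑ i ∈ s, v i * ((schwartzDil φ (a (i + 1)) x - schwartzDil φ (a i) x : ℝ) : ℂ)‖
      ≤ ∑ i ∈ s, V * (2 * Cφ * a (i + 1) / ‖x‖ ^ (n + 1)) := by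
        refine (norm_sum_le _ _).trans (Finset.sum_le_sum fun i _ => ?_)
        rw [norm_mul, Complex.norm_real]
        have hai : a i ≤ a (i + 1) := (le_mul_of_one_le_right (ha i).le hδ.le).trans (hgrow i)
        exact mul_le_mul (hv i) (norm_schwartzDil_sub_le φ (ha i) hai hx) (norm_nonneg _) hV
    _ = 2 * V * Cφ / ‖x‖ ^ (n + 1) * ∑ i ∈ s, a (i + 1) := by
        rw [Finset.mul_sum]; congr 1; ext i; ring
    _ ≤ 2 * V * Cφ / ‖x‖ ^ (n + 1) * (δ / (δ - 1) * a q) := by gcongr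
    _ = _ := by ring

theorem stmt11_general (n : ℕ) (φ : SchwartzMap (EuclideanSpace ℝ (Fin n)) ℝ)
    (δ V : ℝ) (hδ : 1 < δ) :
    ∃ C > 0, ∀ (a : ℤ → ℝ) (v : ℤ → ℂ),
      (∀ i, 0 < a i) → (∀ i, δ ≤ a (i + 1) / a i ∧ a (i + 1) / a i ≤ δ ^ 2) →
      (∀ i, ‖v i‖ ≤ V) →
      ∀ M m k : ℤ, -M ≤ m - 1 → m ≤ k → ∀ z y : EuclideanSpace ℝ (Fin n),
        a k ≤ ‖z - y‖ →
        ‖∑ i ∈ Finset.Icc (-M) (m - 1),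
            v i * ((schwartzDil φ (a (i + 1)) (z - y) - schwartzDil φ (a i) (z - y) : ℝ) : ℂ)‖
          ≤ C * δ ^ (m - k + 1) / a k ^ n := by
  set B := 2 * V * SchwartzMap.seminorm ℝ (n + 1) 0 φ
  refine ⟨max (B / (δ - 1)) 1, lt_max_of_lt_right one_pos, ?_⟩
  intro a v ha hratio hv M m k _ hmk z y hak
  have hgrow : ∀ i, a i * δ ≤ a (i + 1) := fun i => (le_div_iff₀' (ha i)).mp (hratio i).1
  have hB : 0 ≤ B := by have := (norm_nonneg _).trans (hv 0); positivity
  have hk := ha k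
  calc _ ≤ B * (δ / (δ - 1)) * a m / ‖z - y‖ ^ (n + 1) :=
        norm_sum_mul_schwartzDil_sub_le φ hδ ha hgrow hv (fun i hi => by
          linarith [(Finset.mem_Icc.mp hi).2]) (norm_pos_iff.mp (hk.trans_le hak))
    _ ≤ B * (δ / (δ - 1)) * (δ ^ (m - k) * a k) / a k ^ (n + 1) := by
        have := (ha m).le
        gcongr
        exact le_zpow_sub_mul_of_mul_le_succ (by positivity) hgrow hmk
    _ = B / (δ - 1) * δ ^ (m - k + 1) / a k ^ n := by
        rw [zpow_add_one₀ (by positivity)]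
        field_simp
        ring
    _ ≤ max (B / (δ - 1)) 1 * δ ^ (m - k + 1) / a k ^ n := by
        gcongr
        exact le_max_left _ _

theorem stmt11 (n : ℕ) (φ : SchwartzMap (EuclideanSpace ℝ (Fin n)) ℝ)
    (δ V : ℝ) (hδ : 1 < δ) (hV : 0 ≤ V) :
    ∃ C > 0, ∀ (a : ℤ → ℝ) (v : ℤ → ℂ),
      (∀ i, 0 < a i) → (∀ i, δ ≤ a (i + 1) / a i ∧ a (i + 1) / a i ≤ δ ^ 2) →
      (∀ i, ‖v i‖ ≤ V) →
      ∀ M m k : ℤ, -M ≤ m - 1 → m ≤ k → ∀ z y : EuclideanSpace ℝ (Fin n),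
        a k ≤ ‖z - y‖ →
        ‖∑ i ∈ Finset.Icc (-M) (m - 1),
            v i * ((schwartzDil φ (a (i + 1)) (z - y) - schwartzDil φ (a i) (z - y) : ℝ) : ℂ)‖
          ≤ C * δ ^ (m - k + 1) / a k ^ n :=
  stmt11_general n φ δ V hδ
end
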